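/- Let G be a connected non-complete simple graph that is 2K2-free, C3-free and C4-free (no induced subgraph isomorphic to 2K2, to the triangle C3, or to the cycle C4), and let S be any minimal vertex separator of G. Then S is an independent set of G. -/

import Mathlib

open SimpleGraph

/-- A simple graph is `2K₂`-free: there are no four pairwise distinct vertices `a b c d`
with `ab` and `cd` edges and none of `ac, ad, bc, bd` an edge. -/
def TwoK2Free {V : Type*} (G : SimpleGraph V) : Prop :=
  ¬ ∃ a b c d : V, a ≠ b ∧ a ≠ c ∧ a ≠ d ∧ b ≠ c ∧ b ≠ d ∧ c ≠ d ∧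
    G.Adj a b ∧ G.Adj c d ∧ ¬ G.Adj a c ∧ ¬ G.Adj a d ∧ ¬ G.Adj b c ∧ ¬ G.Adj b d

/-- `S ⊊ V(G)` is a vertex separator: deleting `S` leaves a disconnected graph. -/
def IsSeparator {V : Type*} (G : SimpleGraph V) (S : Set V) : Prop :=
  S ≠ Set.univ ∧ ¬ (G.induce (Sᶜ : Set V)).Connected

/-- A minimal vertex separator: no proper subset is a separator. -/
def IsMinSeparator {V : Type*} (G : SimpleGraph V) (S : Set V) : Prop :=
  IsSeparator G S ∧ ∀ S' : Set V, S' ⊂ S → ¬ IsSeparator G S'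

/-- A connected component is trivial if its support is a single vertex. -/
def IsTrivialComp {α : Type*} {H : SimpleGraph α} (C : H.ConnectedComponent) : Prop :=
  ∃ v, C.supp = {v}

/-- `G` has no induced cycle on `n` vertices. -/
def NoInducedCycle {V : Type*} (n : ℕ) (G : SimpleGraph V) : Prop :=
  ¬ Nonempty (cycleGraph n ↪g G)

/-!
If `x` and `y` lie in different components of `G - S`, then `2K₂`-freeness forces one of them,
say `x`, to be isolated in `G - S`. Since `S` is minimal, putting any `s ∈ S` back must reconnect
`x`, so `x` is adjacent to every vertex of `S`, and an edge inside `S` would close a triangle.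
-/

section

variable {V W : Type*} {G : SimpleGraph V}

theorem TwoK2Free.comap {H : SimpleGraph W} (hG : TwoK2Free G) (f : H ↪g G) : TwoK2Free H := by
  rintro ⟨a, b, c, d, hab, hac, had, hbc, hbd, hcd, h1, h2, h3, h4, h5, h6⟩
  exact hG ⟨f a, f b, f c, f d, f.injective.ne hab, f.injective.ne hac, f.injective.ne had,
    f.injective.ne hbc, f.injective.ne hbd, f.injective.ne hcd, f.map_adj_iff.2 h1,
    f.map_adj_iff.2 h2, mt f.map_adj_iff.1 h3, mt f.map_adj_iff.1 h4, mt f.map_adj_iff.1 h5,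
    mt f.map_adj_iff.1 h6⟩

theorem TwoK2Free.induce (hG : TwoK2Free G) (s : Set V) : TwoK2Free (G.induce s) :=
  hG.comap (Embedding.induce s)

/-- Two edges in different components of a graph would form an induced `2K₂`. -/
theorem TwoK2Free.isolated_of_not_reachable (hG : TwoK2Free G) {x y : V}
    (hxy : ¬ G.Reachable x y) : (∀ p, ¬ G.Adj x p) ∨ (∀ q, ¬ G.Adj y q) := by
  by_contra! ⟨⟨p, hxp⟩, ⟨q, hyq⟩⟩
  have hpy : ¬ G.Reachable p y := fun h => hxy (hxp.reachable.trans h)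
  have hpq : ¬ G.Reachable p q := fun h => hpy (h.trans hyq.reachable.symm)
  have hxq : ¬ G.Reachable x q := fun h => hxy (h.trans hyq.reachable.symm)
  exact hG ⟨x, p, y, q, hxp.ne, fun h => hxy (h ▸ .rfl), fun h => hxq (h ▸ .rfl),
    fun h => hpy (h ▸ .rfl), fun h => hpq (h ▸ .rfl), hyq.ne, hxp, hyq,
    fun h => hxy h.reachable, fun h => hxq h.reachable, fun h => hpy h.reachable,
    fun h => hpq h.reachable⟩

theorem IsSeparator.exists_not_reachable {S : Set V} (hS : IsSeparator G S) :
    ∃ x y : (Sᶜ : Set V), ¬ (G.induce Sᶜ).Reachable x y := by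
  obtain ⟨a, ha⟩ := Set.ne_univ_iff_exists_notMem S |>.1 hS.1
  have : Nonempty (Sᶜ : Set V) := ⟨⟨a, ha⟩⟩
  by_contra! h
  exact hS.2 ⟨h⟩

theorem IsMinSeparator.adj_of_isolated {S : Set V} (hS : IsMinSeparator G S) {s : V} (hs : s ∈ S)
    {z w : (Sᶜ : Set V)} (hzw : ¬ (G.induce Sᶜ).Reachable z w)
    (hz : ∀ p, ¬ (G.induce Sᶜ).Adj z p) : G.Adj z s := by
  have hsS : S \ {s} ⊂ S := Set.sdiff_singleton_ssubset.2 hs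
  have hconn : (G.induce (S \ {s})ᶜ).Connected := by
    by_contra h
    exact hS.2 _ hsS ⟨fun huniv => (huniv ▸ Set.mem_univ s).2 rfl, h⟩
  have hzw' : (z : V) ≠ w := fun h => hzw (Subtype.ext h ▸ .rfl)
  have : Nontrivial ((S \ {s})ᶜ : Set V) :=
    ⟨⟨z, fun h => z.2 h.1⟩, ⟨w, fun h => w.2 h.1⟩, fun h => hzw' congr($h.1)⟩
  obtain ⟨b, hzb⟩ := hconn.preconnected.exists_adj_of_nontrivial ⟨z, fun h => z.2 h.1⟩
  by_cases hbS : (b : V) ∈ S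
  · have hbs : (b : V) = s := by
      by_contra hbs
      exact b.2 ⟨hbS, hbs⟩
    exact hbs ▸ hzb
  · exact absurd hzb (hz ⟨b, hbS⟩)

theorem NoInducedCycle.cliqueFree_three (hG : NoInducedCycle 3 G) : G.CliqueFree 3 := by
  by_contra h
  exact hG ⟨cycleGraph_three_eq_top ▸ topEmbeddingOfNotCliqueFree h⟩

end

theorem minSeparator_independent_general {V : Type*} (G : SimpleGraph V)
    (h2k2 : TwoK2Free G) (hc3 : NoInducedCycle 3 G)
    (S : Set V) (hS : IsMinSeparator G S) :
    ∀ u ∈ S, ∀ v ∈ S, ¬ G.Adj u v := by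
  classical
  intro u hu v hv huv
  obtain ⟨x, y, hxy⟩ := hS.1.exists_not_reachable
  have no_isolated {z w : (Sᶜ : Set V)} (hzw : ¬ (G.induce Sᶜ).Reachable z w)
      (hz : ∀ p, ¬ (G.induce Sᶜ).Adj z p) : False :=
    hc3.cliqueFree_three {z.1, u, v} (is3Clique_triple_iff.2
      ⟨hS.adj_of_isolated hu hzw hz, hS.adj_of_isolated hv hzw hz, huv⟩)
  rcases (h2k2.induce Sᶜ).isolated_of_not_reachable hxy with hx | hy
  · exact no_isolated hxy hx
  · exact no_isolated (fun h => hxy h.symm) hy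

/-- In a connected non-complete `(2K₂, C₃, C₄)`-free graph, every minimal vertex separator
is an independent set. -/
theorem minSeparator_independent {V : Type*} (G : SimpleGraph V)
    (hconn : G.Connected) (hnc : ∃ u v : V, u ≠ v ∧ ¬ G.Adj u v)
    (h2k2 : TwoK2Free G) (hc3 : NoInducedCycle 3 G) (hc4 : NoInducedCycle 4 G)
    (S : Set V) (hS : IsMinSeparator G S) :
    ∀ u ∈ S, ∀ v ∈ S, ¬ G.Adj u v :=
  minSeparator_independent_general G h2k2 hc3 S hS
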